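/- arXiv:1907.05517 — 3 statements merged into one kernel-verified Lean document; each statement's English description precedes it below -/
import Mathlib

section
/- Consider finitely many points $c_1, \ldots, c_n$ in the plane with associated radii $r_i > 0$ and powers $0 \leq p_i \leq r_i^{\alpha}$, where $\alpha > 2$, $\gamma > 1$, $r_i \leq r_n$ for all $i$, the disks of radii $r_i$ around $c_i$ are pairwise disjoint, and $\mathrm{dist}(c_i, c_j) \geq \gamma (r_i + r_j)$ for $i \neq j$. If at some point $q$ with $\mathrm{dist}(c_n, q) = r_n$ the total received power $\sum_{i=1}^{n} p_i / \mathrm{dist}(c_i, q)^{\alpha} \geq 1$, then $p_n \geq (1 - \beta_2) r_n^{\alpha}$, where $\beta_2 = \frac{1}{(\alpha - 2)\, \gamma^{\alpha - 2}} \left( \frac{\gamma (2\gamma + 1)}{(\gamma - 1)(2\gamma - 1)} \right)^{\alpha}$. -/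
/-
Around every other centre `c i` put the ball `B i` of radius `κ r i`, where `κ = 2γ/(γ+1) < γ`.
By the separation these balls are pairwise disjoint and avoid the ball of radius `γ r n` about
`c n`, and on `B i` the distance to `c n` is at most `L · dist (c i) q` with
`L = (2γ+κ)/(2(γ-1))`. Since `p i ≤ r i ^ α ≤ r n ^ (α-2) r i ^ 2` and `r i ^ 2` is proportional to
the area of `B i`, each interference term is a fixed multiple of a lower bound for
`∫_{B i} |x - c n|^(-α)`. Summing, the interference is controlled by the integral of
`|x - c n|^(-α)` outside the ball of radius `γ r n`, which polar coordinates evaluate to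
`2π (γ r n)^(2-α)/(α-2)`. With this choice of `κ` the resulting constant
`2 L^α / (κ² (α-2) γ^(α-2))` is at most `β₂`, and the rest of the received power must come from
`c n`.
-/

open Real MeasureTheory Metric Set Module

section Annulus

variable {E : Type*} [NormedAddCommGroup E] {α R : ℝ}

lemma indicator_compl_closedBall_dist_rpow (z : E) :
    (closedBall z R)ᶜ.indicator (fun x => dist x z ^ (-α)) =
      fun x => (Ioi R).indicator (fun t => t ^ (-α)) ‖x - z‖ := by
  ext x
  simp [indicator, dist_eq_norm]

variable [NormedSpace ℝ E] [FiniteDimensional ℝ E] [Nontrivial E]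

lemma eqOn_pow_finrank_sub_one_smul_indicator_rpow :
    EqOn (fun y : ℝ => y ^ (finrank ℝ E - 1) • (Ioi R).indicator (fun t => t ^ (-α)) y)
      ((Ioi R).indicator fun y => y ^ ((finrank ℝ E : ℝ) - 1 - α)) (Ioi 0) := by
  intro y (hy : 0 < y)
  by_cases hyR : R < y
  · simp only [indicator_of_mem (show y ∈ Ioi R from hyR), smul_eq_mul]
    rw [← Real.rpow_natCast, ← Real.rpow_add hy, Nat.cast_sub finrank_pos]
    ring_nf
  · simp [indicator_of_notMem (show y ∉ Ioi R from hyR)]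

variable [MeasurableSpace E] [BorelSpace E] (μ : Measure E) [μ.IsAddHaarMeasure]

theorem integrableOn_compl_closedBall_dist_rpow (hα : finrank ℝ E < α) (hR : 0 < R) (z : E) :
    IntegrableOn (fun x => dist x z ^ (-α)) (closedBall z R)ᶜ μ := by
  rw [← integrable_indicator_iff measurableSet_closedBall.compl,
    indicator_compl_closedBall_dist_rpow]
  refine Integrable.comp_sub_right (f := fun x : E => (Ioi R).indicator (· ^ (-α)) ‖x‖) ?_ z
  rw [integrable_fun_norm_addHaar,
    integrableOn_congr_fun eqOn_pow_finrank_sub_one_smul_indicator_rpow measurableSet_Ioi,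
    IntegrableOn, integrable_indicator_iff measurableSet_Ioi]
  exact (integrableOn_Ioi_rpow_of_lt (by linarith) hR).mono_measure Measure.restrict_le_self

theorem setIntegral_compl_closedBall_dist_rpow (hα : finrank ℝ E < α) (hR : 0 < R) (z : E) :
    ∫ x in (closedBall z R)ᶜ, dist x z ^ (-α) ∂μ =
      finrank ℝ E * μ.real (ball 0 1) * (R ^ ((finrank ℝ E : ℝ) - α) / (α - finrank ℝ E)) := by
  rw [← integral_indicator measurableSet_closedBall.compl, indicator_compl_closedBall_dist_rpow,
    integral_sub_right_eq_self (fun x : E => (Ioi R).indicator (· ^ (-α)) ‖x‖),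
    integral_fun_norm_addHaar,
    setIntegral_congr_fun measurableSet_Ioi eqOn_pow_finrank_sub_one_smul_indicator_rpow,
    setIntegral_indicator measurableSet_Ioi, inter_eq_right.mpr (Ioi_subset_Ioi hR.le),
    integral_Ioi_rpow_of_lt (by linarith) hR,
    show (finrank ℝ E : ℝ) - 1 - α + 1 = -(α - finrank ℝ E) by ring, div_neg, neg_div, neg_neg,
    neg_sub, nsmul_eq_mul, smul_eq_mul, mul_assoc]

theorem MeasureTheory.Measure.addHaar_real_ball {x : E} {r : ℝ} (hr : 0 ≤ r) :
    μ.real (ball x r) = r ^ finrank ℝ E * μ.real (ball 0 1) := by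
  simp [Measure.real, μ.addHaar_ball x hr, ENNReal.toReal_ofReal (pow_nonneg hr _)]

end Annulus

section Separated

variable {X : Type*} [PseudoMetricSpace X] {γ κ ri rn : ℝ} {ci cn q x : X}

lemma ball_subset_compl_closedBall_of_separated (hκγ : κ ≤ γ) (hri : 0 ≤ ri)
    (hsep : γ * (ri + rn) ≤ dist ci cn) : ball ci (κ * ri) ⊆ (closedBall cn (γ * rn))ᶜ :=
  (ball_disjoint_closedBall (by nlinarith)).subset_compl_right

lemma dist_le_of_mem_ball_of_separated (hγ : 1 < γ) (hκ : 0 ≤ κ) (hle : ri ≤ rn)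
    (hsep : γ * (ri + rn) ≤ dist ci cn) (hq : dist cn q = rn) (hx : x ∈ ball ci (κ * ri)) :
    dist x cn ≤ (2 * γ + κ) / (2 * (γ - 1)) * dist ci q := by
  have hxi : dist x ci < κ * ri := mem_ball.mp hx
  have hri : 0 ≤ ri := by nlinarith [dist_nonneg (x := x) (y := ci)]
  have hxn : dist x cn ≤ κ * ri + dist ci cn := by linarith [dist_triangle x ci cn]
  have hin : dist ci cn ≤ dist ci q + rn := by linarith [dist_triangle ci q cn, dist_comm q cn]
  have hri_le : 2 * γ * ri ≤ dist ci cn := by nlinarith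
  have hin_le : (γ - 1) * dist ci cn ≤ γ * dist ci q := by nlinarith
  have hκri_le : 2 * (γ - 1) * κ * ri ≤ κ * dist ci q := by
    refine le_of_mul_le_mul_left ?_ (by linarith : 0 < γ)
    nlinarith [mul_le_mul_of_nonneg_left hri_le (by nlinarith : 0 ≤ κ * (γ - 1)),
      mul_le_mul_of_nonneg_left hin_le hκ]
  rw [div_mul_eq_mul_div, le_div_iff₀ (by linarith)]
  nlinarith [mul_le_mul_of_nonneg_left hxn (by linarith : 0 ≤ 2 * (γ - 1))]

end Separated

lemma Real.rpow_le_rpow_sub_mul_pow {a b α : ℝ} {k : ℕ} (ha : 0 < a) (hab : a ≤ b) (hk : k ≤ α) :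
    a ^ α ≤ b ^ (α - k) * a ^ k :=
  calc a ^ α = a ^ (α - k) * a ^ k := by
        rw [← Real.rpow_natCast, ← Real.rpow_add ha, sub_add_cancel]
    _ ≤ b ^ (α - k) * a ^ k := by gcongr

theorem MeasureTheory.Measure.real_ball_pos {X : Type*} [PseudoMetricSpace X] [ProperSpace X]
    [MeasurableSpace X] (μ : Measure X) [μ.IsOpenPosMeasure] [IsFiniteMeasureOnCompacts μ] (x : X)
    {r : ℝ} (hr : 0 < r) : 0 < μ.real (ball x r) :=
  ENNReal.toReal_pos (measure_ball_pos μ x hr).ne' measure_ball_lt_top.ne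

section Interference

variable {E : Type*} [NormedAddCommGroup E] [NormedSpace ℝ E] [FiniteDimensional ℝ E]
  [Nontrivial E] {α γ κ : ℝ}

theorem div_dist_rpow_le_mul_setIntegral [MeasurableSpace E] [BorelSpace E] (μ : Measure E)
    [μ.IsAddHaarMeasure] (hα : finrank ℝ E < α) (hγ : 1 < γ) (hκ : 0 < κ) (hκγ : κ ≤ γ)
    {ri rn p : ℝ} {ci cn q : E} (hri : 0 < ri) (hle : ri ≤ rn) (hp : p ≤ ri ^ α)
    (hsep : γ * (ri + rn) ≤ dist ci cn) (hq : dist cn q = rn) :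
    p / dist ci q ^ α ≤
      rn ^ (α - finrank ℝ E) * ((2 * γ + κ) / (2 * (γ - 1))) ^ α /
          (κ ^ finrank ℝ E * μ.real (ball 0 1)) *
        ∫ x in ball ci (κ * ri), dist x cn ^ (-α) ∂μ := by
  set L := (2 * γ + κ) / (2 * (γ - 1))
  have hL : 0 < L := div_pos (by linarith) (by linarith)
  have hV := μ.real_ball_pos 0 one_pos
  have hsub := ball_subset_compl_closedBall_of_separated hκγ hri.le hsep
  have hlow : (L * dist ci q) ^ (-α) * μ.real (ball ci (κ * ri)) ≤
      ∫ x in ball ci (κ * ri), dist x cn ^ (-α) ∂μ := by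
    refine setIntegral_ge_of_const_le_real measurableSet_ball (measure_ball_lt_top (μ := μ)).ne
      (fun x hx => ?_) ((integrableOn_compl_closedBall_dist_rpow μ hα
        (by nlinarith) cn).mono_set hsub)
    have hxn : γ * rn < dist x cn := not_le.mp (hsub hx)
    exact Real.rpow_le_rpow_of_nonpos (by nlinarith)
      (dist_le_of_mem_ball_of_separated hγ hκ.le hle hsep hq hx) (by linarith)
  calc p / dist ci q ^ α ≤ (rn ^ (α - finrank ℝ E) * ri ^ finrank ℝ E) * dist ci q ^ (-α) := by
        rw [Real.rpow_neg dist_nonneg, ← div_eq_mul_inv]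
        gcongr
        exact hp.trans (Real.rpow_le_rpow_sub_mul_pow hri hle hα.le)
    _ = rn ^ (α - finrank ℝ E) * L ^ α / (κ ^ finrank ℝ E * μ.real (ball 0 1)) *
          ((L * dist ci q) ^ (-α) * μ.real (ball ci (κ * ri))) := by
        rw [μ.addHaar_real_ball (mul_pos hκ hri).le,
          Real.mul_rpow hL.le dist_nonneg, Real.rpow_neg hL.le]
        field_simp
        ring
    _ ≤ _ := by
        have hrn : 0 < rn := hri.trans_le hle
        gcongr

theorem sum_div_dist_rpow_le_of_separated (hα : finrank ℝ E < α) (hγ : 1 < γ) (hκ : 0 < κ)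
    (hκγ : κ ≤ γ) {n : ℕ} {c : ℕ → E} {r p : ℕ → ℝ} (hr : ∀ i ≤ n, 0 < r i)
    (hp : ∀ i < n, p i ≤ r i ^ α) (hle : ∀ i < n, r i ≤ r n)
    (hsep : ∀ i ≤ n, ∀ j ≤ n, i ≠ j → γ * (r i + r j) ≤ dist (c i) (c j)) {q : E}
    (hq : dist (c n) q = r n) :
    ∑ i ∈ Finset.range n, p i / dist (c i) q ^ α ≤
      finrank ℝ E * ((2 * γ + κ) / (2 * (γ - 1))) ^ α /
        (κ ^ finrank ℝ E * (α - finrank ℝ E) * γ ^ (α - finrank ℝ E)) := by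
  let _ : MeasurableSpace E := borel E
  have _ : BorelSpace E := ⟨rfl⟩
  -- Any Haar measure will do: the volume of its unit ball cancels.
  set μ : Measure E := Measure.addHaar
  set f : E → ℝ := fun x => dist x (c n) ^ (-α)
  set B : ℕ → Set E := fun i => ball (c i) (κ * r i)
  set A := (closedBall (c n) (γ * r n))ᶜ
  set C := r n ^ (α - finrank ℝ E) * ((2 * γ + κ) / (2 * (γ - 1))) ^ α /
    (κ ^ finrank ℝ E * μ.real (ball 0 1))
  have hrn : 0 < r n := hr n le_rfl
  have hfA : IntegrableOn f A μ :=
    integrableOn_compl_closedBall_dist_rpow μ hα (by positivity) (c n)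
  have hBA : ∀ i ∈ Finset.range n, B i ⊆ A := fun i hi =>
    have hi := Finset.mem_range.mp hi
    ball_subset_compl_closedBall_of_separated hκγ (hr i hi.le).le (hsep i hi.le n le_rfl hi.ne)
  have hdisj : (↑(Finset.range n) : Set ℕ).Pairwise (Function.onFun Disjoint B) := by
    intro i hi j hj hij
    simp only [Finset.coe_range, mem_Iio] at hi hj
    exact ball_disjoint_ball (show κ * r i + κ * r j ≤ _ by
      nlinarith [hr i hi.le, hr j hj.le, hsep i hi.le j hj.le hij])
  have hunion : ∑ i ∈ Finset.range n, ∫ x in B i, f x ∂μ ≤ ∫ x in A, f x ∂μ := by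
    rw [← integral_biUnion_finset _ (fun i _ => measurableSet_ball) hdisj
      (fun i hi => hfA.mono_set (hBA i hi))]
    exact setIntegral_mono_set hfA (ae_of_all _ fun x => Real.rpow_nonneg dist_nonneg _)
      (iUnion₂_subset hBA).eventuallyLE
  have hγn : (γ * r n) ^ ((finrank ℝ E : ℝ) - α) =
      (γ ^ (α - finrank ℝ E))⁻¹ * (r n ^ (α - finrank ℝ E))⁻¹ := by
    rw [Real.mul_rpow (by linarith) hrn.le, show (finrank ℝ E : ℝ) - α = -(α - finrank ℝ E)
      by ring, Real.rpow_neg (by linarith), Real.rpow_neg hrn.le]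
  have hV := μ.real_ball_pos 0 one_pos
  calc ∑ i ∈ Finset.range n, p i / dist (c i) q ^ α
      ≤ ∑ i ∈ Finset.range n, C * ∫ x in B i, f x ∂μ := Finset.sum_le_sum fun i hi =>
        have hi := Finset.mem_range.mp hi
        div_dist_rpow_le_mul_setIntegral μ hα hγ hκ hκγ (hr i hi.le) (hle i hi) (hp i hi)
          (hsep i hi.le n le_rfl hi.ne) hq
    _ ≤ C * ∫ x in A, f x ∂μ := by
        rw [← Finset.mul_sum]
        exact mul_le_mul_of_nonneg_left hunion (by positivity)
    _ = _ := by
        rw [setIntegral_compl_closedBall_dist_rpow μ hα (by positivity), hγn]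
        simp only [C]
        field_simp

end Interference

lemma interference_constant_le {α γ : ℝ} (hα : 2 < α) (hγ : 1 < γ) :
    2 * ((2 * γ + 2 * γ / (γ + 1)) / (2 * (γ - 1))) ^ α /
        ((2 * γ / (γ + 1)) ^ 2 * (α - 2) * γ ^ (α - 2)) ≤
      1 / ((α - 2) * γ ^ (α - 2)) * ((γ * (2 * γ + 1)) / ((γ - 1) * (2 * γ - 1))) ^ α := by
  set κ := 2 * γ / (γ + 1)
  set M := γ * (2 * γ + 1) / ((γ - 1) * (2 * γ - 1))
  set b := (γ + 2) * (2 * γ - 1) / ((γ + 1) * (2 * γ + 1))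
  have hM : 0 < M := div_pos (by nlinarith) (by nlinarith)
  have hb : 0 < b := div_pos (by nlinarith) (by nlinarith)
  have hb1 : b ≤ 1 := by rw [div_le_one (by nlinarith)]; nlinarith
  have hbM : (2 * γ + κ) / (2 * (γ - 1)) = b * M := by
    have : 2 * γ - 1 ≠ 0 := by linarith
    have : γ - 1 ≠ 0 := by linarith
    simp only [κ, b, M]
    field_simp
    ring
  have hb2 : 2 * b ^ 2 ≤ κ ^ 2 := by
    rw [div_pow, div_pow, ← mul_div_assoc, div_le_div_iff₀ (by positivity) (by positivity)]
    nlinarith [mul_pos (mul_pos (by linarith : (0:ℝ) < γ) (by linarith : (0:ℝ) < γ))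
      (mul_pos (by linarith : (0:ℝ) < γ) (sub_pos.mpr hγ))]
  have hbα : b ^ α ≤ b ^ 2 := by
    simpa using Real.rpow_le_rpow_of_exponent_ge hb hb1 hα.le
  have hLM : 2 * ((2 * γ + κ) / (2 * (γ - 1))) ^ α ≤ κ ^ 2 * M ^ α := by
    rw [hbM, Real.mul_rpow hb.le hM.le, ← mul_assoc]
    gcongr
    linarith
  have hκ : 0 < κ := by positivity
  calc _ ≤ κ ^ 2 * M ^ α / (κ ^ 2 * ((α - 2) * γ ^ (α - 2))) := by
        rw [← mul_assoc]
        exact div_le_div_of_nonneg_right hLM (by positivity)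
    _ = _ := by field_simp

theorem stmt_6_general (α γ : ℝ) (hα : 2 < α) (hγ : 1 < γ) (n : ℕ)
    (c : ℕ → EuclideanSpace ℝ (Fin 2)) (r p : ℕ → ℝ)
    (hr : ∀ i ≤ n, 0 < r i) (hp1 : ∀ i ≤ n, p i ≤ r i ^ α)
    (hle : ∀ i ≤ n, r i ≤ r n)
    (hsep : ∀ i ≤ n, ∀ j ≤ n, i ≠ j → γ * (r i + r j) ≤ dist (c i) (c j))
    (q : EuclideanSpace ℝ (Fin 2)) (hq : dist (c n) q = r n)
    (hpow : 1 ≤ ∑ i ∈ Finset.range (n + 1), p i / dist (c i) q ^ α) :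
    (1 - 1 / ((α - 2) * γ ^ (α - 2)) *
        ((γ * (2 * γ + 1)) / ((γ - 1) * (2 * γ - 1))) ^ α) * r n ^ α ≤ p n := by
  have hκγ : 2 * γ / (γ + 1) ≤ γ := by rw [div_le_iff₀ (by linarith)]; nlinarith
  have hinterference := sum_div_dist_rpow_le_of_separated (κ := 2 * γ / (γ + 1))
    (by rwa [finrank_euclideanSpace_fin, Nat.cast_ofNat]) hγ (by positivity) hκγ hr
    (fun i hi => hp1 i hi.le) (fun i hi => hle i hi.le) hsep hq
  rw [finrank_euclideanSpace_fin, Nat.cast_ofNat] at hinterference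
  have hβ := interference_constant_le hα hγ
  rw [Finset.sum_range_succ, hq] at hpow
  rw [← le_div_iff₀ (Real.rpow_pos_of_pos (hr n le_rfl) α)]
  linarith

theorem stmt_6 (α γ : ℝ) (hα : 2 < α) (hγ : 1 < γ) (n : ℕ)
    (c : ℕ → EuclideanSpace ℝ (Fin 2)) (r p : ℕ → ℝ)
    (hr : ∀ i ≤ n, 0 < r i) (hp0 : ∀ i ≤ n, 0 ≤ p i) (hp1 : ∀ i ≤ n, p i ≤ r i ^ α)
    (hle : ∀ i ≤ n, r i ≤ r n)
    (hdisj : ∀ i ≤ n, ∀ j ≤ n, i ≠ j →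
      Disjoint (Metric.closedBall (c i) (r i)) (Metric.closedBall (c j) (r j)))
    (hsep : ∀ i ≤ n, ∀ j ≤ n, i ≠ j → γ * (r i + r j) ≤ dist (c i) (c j))
    (q : EuclideanSpace ℝ (Fin 2)) (hq : dist (c n) q = r n)
    (hpow : 1 ≤ ∑ i ∈ Finset.range (n + 1), p i / dist (c i) q ^ α) :
    (1 - 1 / ((α - 2) * γ ^ (α - 2)) *
        ((γ * (2 * γ + 1)) / ((γ - 1) * (2 * γ - 1))) ^ α) * r n ^ α ≤ p n :=
  stmt_6_general α γ hα hγ n c r p hr hp1 hle hsep q hq hpow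
end

section
/- Let $u$ be a point in the plane, $P_u > 0$, and let $f_u(p) = \min(1, P_u/\mathrm{dist}(u,p)^2)$. Let $U \subseteq \mathbb{R}^2$ be a measurable set of area $\Delta$ with $\Delta \geq \pi P_u$. Then $\int_{U} f_u \, dA \leq \pi P_u + \pi P_u \ln\left( \frac{\Delta}{\pi P_u} \right)$. -/
open MeasureTheory Real Set
open scoped ENNReal

theorem stmt_9 (P : ℝ) (hP : 0 < P) (u : EuclideanSpace ℝ (Fin 2))
    (U : Set (EuclideanSpace ℝ (Fin 2))) (hU : MeasurableSet U) (Δ : ℝ)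
    (hΔ : volume U = ENNReal.ofReal Δ) (hΔP : π * P ≤ Δ) :
    ∫ p in U, min 1 (P / dist u p ^ 2) ≤ π * P + π * P * Real.log (Δ / (π * P)) := by
  have hπ : 0 < π := Real.pi_pos
  have hπP : 0 < π * P := mul_pos hπ hP
  have hΔpos : 0 < Δ := lt_of_lt_of_le hπP hΔP
  set f : EuclideanSpace ℝ (Fin 2) → ℝ := fun p => min 1 (P / dist u p ^ 2) with hfdef
  set μ := volume.restrict U with hμ
  have hμU : μ Set.univ = ENNReal.ofReal Δ := by
    rw [hμ, Measure.restrict_apply_univ, hΔ]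
  haveI : IsFiniteMeasure μ := ⟨by rw [hμU]; exact ENNReal.ofReal_lt_top⟩
  have hfm : Measurable f :=
    measurable_const.min
      (measurable_const.div ((measurable_const.dist measurable_id).pow_const 2))
  have hf0 : ∀ p, 0 ≤ f p := fun p =>
    le_min zero_le_one (div_nonneg hP.le (sq_nonneg _))
  have hf1 : ∀ p, f p ≤ 1 := fun p => min_le_left _ _
  -- layer cake
  have key : ∫ p, f p ∂μ = (∫⁻ t in Ioi (0:ℝ), μ {a | t < f a}).toReal := by
    rw [integral_eq_lintegral_of_nonneg_ae (ae_of_all _ hf0) hfm.aestronglyMeasurable,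
      lintegral_eq_lintegral_meas_lt μ (ae_of_all _ hf0) hfm.aemeasurable]
  set t0 : ℝ := π * P / Δ with ht0def
  have ht0pos : 0 < t0 := div_pos hπP hΔpos
  have ht0le1 : t0 ≤ 1 := (div_le_one hΔpos).mpr hΔP
  set G : ℝ → ℝ≥0∞ := fun t =>
      (Ioc (0:ℝ) t0).indicator (fun _ => ENNReal.ofReal Δ) t +
      (Ioc t0 1).indicator (fun t => ENNReal.ofReal (π * P / t)) t with hGdef
  have hball : ∀ t : ℝ, 0 < t →
      volume (Metric.ball u (Real.sqrt (P / t))) = ENNReal.ofReal (π * P / t) := by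
    intro t ht
    rw [EuclideanSpace.volume_ball]
    rw [Fintype.card_fin]
    have hG : Real.Gamma (((2:ℕ):ℝ) / 2 + 1) = 1 := by
      have : ((2:ℕ):ℝ) / 2 + 1 = 2 := by norm_num
      rw [this, Real.Gamma_two]
    rw [hG]
    rw [← ENNReal.ofReal_pow (Real.sqrt_nonneg _),
      Real.sq_sqrt (div_nonneg hP.le ht.le), ← ENNReal.ofReal_mul
      (div_nonneg hP.le ht.le)]
    congr 1
    rw [Real.sq_sqrt pi_pos.le]
    ring
  have hbound : ∀ t ∈ Ioi (0:ℝ), μ {a | t < f a} ≤ G t := by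
    intro t ht
    simp only [mem_Ioi] at ht
    rcases le_or_gt t t0 with h1 | h1
    · calc μ {a | t < f a} ≤ μ Set.univ := measure_mono (subset_univ _)
        _ = ENNReal.ofReal Δ := hμU
        _ ≤ G t := by
            rw [hGdef]
            refine le_add_of_le_of_nonneg ?_ zero_le
            rw [indicator_of_mem (Set.mem_Ioc.mpr ⟨ht, h1⟩)]
    · rcases le_or_gt t 1 with h2 | h2
      · -- πP/t bound
        have hsub : {a | t < f a} ⊆ Metric.ball u (Real.sqrt (P / t)) := by
          intro p hp
          simp only [mem_setOf_eq] at hp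
          have h3 : t < P / dist u p ^ 2 := lt_of_lt_of_le hp (min_le_right _ _)
          have hd2 : dist u p ^ 2 < P / t := by
            have hd2pos : 0 < dist u p ^ 2 := by
              by_contra h
              push_neg at h
              have : dist u p ^ 2 = 0 := le_antisymm h (sq_nonneg _)
              rw [this, div_zero] at h3
              exact absurd h3 (not_lt.mpr ht.le)
            rw [lt_div_iff₀ ht]
            rw [lt_div_iff₀ hd2pos] at h3
            linarith [h3]
          have hlt := Real.sqrt_lt_sqrt (sq_nonneg (dist u p)) hd2
          rw [Real.sqrt_sq dist_nonneg] at hlt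
          exact Metric.mem_ball.mpr (by rwa [dist_comm])
        calc μ {a | t < f a} ≤ volume {a | t < f a} :=
              Measure.restrict_le_self _
          _ ≤ volume (Metric.ball u (Real.sqrt (P / t))) := measure_mono hsub
          _ = ENNReal.ofReal (π * P / t) := hball t ht
          _ ≤ G t := by
              rw [hGdef]
              refine le_add_of_nonneg_of_le zero_le ?_
              rw [indicator_of_mem (Set.mem_Ioc.mpr ⟨h1, h2⟩)]
      · have hempty : {a | t < f a} = ∅ := by
          ext p
          simp only [mem_setOf_eq, mem_empty_iff_false, iff_false, not_lt]
          exact le_trans (hf1 p) h2.le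
        rw [hempty, measure_empty]
        exact zero_le
  have hmono : ∫⁻ t in Ioi (0:ℝ), μ {a | t < f a} ≤ ∫⁻ t in Ioi (0:ℝ), G t :=
    setLIntegral_mono' measurableSet_Ioi hbound
  -- compute ∫⁻ G
  have hGval : ∫⁻ t in Ioi (0:ℝ), G t =
      ENNReal.ofReal Δ * ENNReal.ofReal t0 +
      ENNReal.ofReal (π * P * Real.log (Δ / (π * P))) := by
    rw [hGdef]
    rw [lintegral_add_left ((measurable_const.indicator measurableSet_Ioc))]
    congr 1
    · rw [lintegral_indicator measurableSet_Ioc,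
        Measure.restrict_restrict measurableSet_Ioc,
        inter_eq_left.mpr (fun x hx => hx.1)]
      rw [lintegral_const, Measure.restrict_apply_univ, Real.volume_Ioc, sub_zero]
    · rw [lintegral_indicator measurableSet_Ioc,
        Measure.restrict_restrict measurableSet_Ioc,
        Set.Ioc_inter_Ioi, max_eq_left ht0pos.le]
      have hint : IntegrableOn (fun t => π * P / t) (Ioc t0 1) := by
        refine IntegrableOn.mono_set ?_ Ioc_subset_Icc_self
        apply ContinuousOn.integrableOn_Icc
        exact continuousOn_const.div continuousOn_id
          (fun x hx => ne_of_gt (lt_of_lt_of_le ht0pos hx.1))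
      have hnn : 0 ≤ᵐ[volume.restrict (Ioc t0 1)] fun t => π * P / t :=
        (ae_restrict_iff' measurableSet_Ioc).mpr (ae_of_all _
          (fun t ht => div_nonneg hπP.le (lt_trans ht0pos ht.1).le))
      rw [← ofReal_integral_eq_lintegral_ofReal hint hnn]
      congr 1
      rw [← intervalIntegral.integral_of_le ht0le1]
      have hrw : ∀ t : ℝ, π * P / t = π * P * (1 / t) := fun t => by ring
      simp_rw [hrw]
      rw [intervalIntegral.integral_const_mul, integral_one_div
        (fun h => by
          rw [Set.uIcc_of_le ht0le1] at h
          exact absurd h.1 (not_le.mpr ht0pos))]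
      rw [ht0def, one_div_div]
  -- conclude
  have hfin : ENNReal.ofReal Δ * ENNReal.ofReal t0 +
      ENNReal.ofReal (π * P * Real.log (Δ / (π * P))) ≠ ⊤ := by
    exact ENNReal.add_ne_top.mpr ⟨ENNReal.mul_ne_top ENNReal.ofReal_ne_top
      ENNReal.ofReal_ne_top, ENNReal.ofReal_ne_top⟩
  have hlog : 0 ≤ Real.log (Δ / (π * P)) :=
    Real.log_nonneg ((one_le_div hπP).mpr hΔP)
  have hmain : ∫ p, f p ∂μ ≤ π * P + π * P * Real.log (Δ / (π * P)) := by
    rw [key]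
    calc (∫⁻ t in Ioi (0:ℝ), μ {a | t < f a}).toReal
        ≤ (∫⁻ t in Ioi (0:ℝ), G t).toReal :=
          ENNReal.toReal_mono (by rw [hGval]; exact hfin) hmono
      _ = π * P + π * P * Real.log (Δ / (π * P)) := by
          rw [hGval, ENNReal.toReal_add (ENNReal.mul_ne_top ENNReal.ofReal_ne_top
            ENNReal.ofReal_ne_top) ENNReal.ofReal_ne_top,
            ENNReal.toReal_mul, ENNReal.toReal_ofReal hΔpos.le,
            ENNReal.toReal_ofReal ht0pos.le,
            ENNReal.toReal_ofReal (mul_nonneg hπP.le hlog)]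
          rw [ht0def]
          field_simp
  exact hmain
end

section
/- In an $m \times m$ grid of points with minimum spacing $d$ ($n = m^2$ nodes), any non-cooperative broadcast requires total power at least $n d^2 / 9$. Formally: let $A$ be a finite set of grid nodes with powers $\rho(u) \geq d^2$, and suppose every one of the $n$ grid nodes lies within distance $\sqrt{\rho(u)}$ of some $u \in A$. Then $\sum_{u \in A} \rho(u) \geq \frac{n d^2}{9}$. -/
/-!
Counting argument: the disk of radius `√ρ(u)` around a grid node `u` stays inside the
`(2k+1) × (2k+1)` box of grid nodes with `k = ⌊√ρ(u)/d⌋`, so it covers at most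
`(2k+1)² ≤ 9ρ(u)/d²` nodes, using `√ρ(u)/d ≥ 1`. The disks cover all `m²` nodes, so summing
over `A` gives `m² ≤ 9 ∑ ρ(u) / d²`.
-/

/-- Grid node `(i, j)` sits at the point `(i*d, j*d)` of the Euclidean plane. -/
noncomputable def gridPos (d : ℝ) (ij : ℕ × ℕ) : EuclideanSpace ℝ (Fin 2) :=
  WithLp.toLp 2 ![(ij.1 : ℝ) * d, (ij.2 : ℝ) * d]

open Finset

lemma Nat.lt_add_floor_add_one_of_cast_sub_le {a b : ℕ} {t : ℝ} (h : (a : ℝ) - b ≤ t) :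
    a < b + ⌊t⌋₊ + 1 := by
  have : (a : ℝ) < b + ⌊t⌋₊ + 1 := by linarith [Nat.lt_floor_add_one t]
  exact_mod_cast this

lemma Nat.mem_Icc_sub_floor_add_floor {a b : ℕ} {t : ℝ} (h : |(a : ℝ) - b| ≤ t) :
    a ∈ Icc (b - ⌊t⌋₊) (b + ⌊t⌋₊) := by
  have hab := Nat.lt_add_floor_add_one_of_cast_sub_le (abs_sub_le_iff.1 h).1
  have hba := Nat.lt_add_floor_add_one_of_cast_sub_le (abs_sub_le_iff.1 h).2
  rw [mem_Icc]
  omega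

section gridPos

variable {d : ℝ} (hd : 0 < d)
include hd

lemma abs_fst_sub_mul_le_dist_gridPos (u v : ℕ × ℕ) :
    |(v.1 : ℝ) - u.1| * d ≤ dist (gridPos d v) (gridPos d u) := by
  have := PiLp.dist_apply_le (gridPos d v) (gridPos d u) 0
  simpa [gridPos, Real.dist_eq, ← sub_mul, abs_mul, abs_of_pos hd] using this

lemma abs_snd_sub_mul_le_dist_gridPos (u v : ℕ × ℕ) :
    |(v.2 : ℝ) - u.2| * d ≤ dist (gridPos d v) (gridPos d u) := by
  have := PiLp.dist_apply_le (gridPos d v) (gridPos d u) 1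
  simpa [gridPos, Real.dist_eq, ← sub_mul, abs_mul, abs_of_pos hd] using this

lemma mem_box_of_dist_gridPos_le {u v : ℕ × ℕ} {r : ℝ}
    (h : dist (gridPos d v) (gridPos d u) ≤ r) :
    v ∈ Icc (u.1 - ⌊r / d⌋₊) (u.1 + ⌊r / d⌋₊) ×ˢ Icc (u.2 - ⌊r / d⌋₊) (u.2 + ⌊r / d⌋₊) := by
  rw [mem_product]
  constructor <;> apply Nat.mem_Icc_sub_floor_add_floor <;> rw [le_div_iff₀ hd]
  · exact (abs_fst_sub_mul_le_dist_gridPos hd u v).trans h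
  · exact (abs_snd_sub_mul_le_dist_gridPos hd u v).trans h

lemma card_filter_dist_gridPos_le (s : Finset (ℕ × ℕ)) (u : ℕ × ℕ) (r : ℝ) :
    #{v ∈ s | dist (gridPos d v) (gridPos d u) ≤ r} ≤ (2 * ⌊r / d⌋₊ + 1) ^ 2 := by
  calc #{v ∈ s | dist (gridPos d v) (gridPos d u) ≤ r}
      ≤ #(Icc (u.1 - ⌊r / d⌋₊) (u.1 + ⌊r / d⌋₊) ×ˢ Icc (u.2 - ⌊r / d⌋₊) (u.2 + ⌊r / d⌋₊)) :=
        card_le_card fun v hv => mem_box_of_dist_gridPos_le hd (mem_filter.1 hv).2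
    _ ≤ (2 * ⌊r / d⌋₊ + 1) ^ 2 := by
        rw [card_product, Nat.card_Icc, Nat.card_Icc, sq]
        apply Nat.mul_le_mul <;> omega

end gridPos

lemma Nat.two_mul_floor_add_one_sq_le {x : ℝ} (hx : 1 ≤ x) :
    ((2 * ⌊x⌋₊ + 1 : ℕ) : ℝ) ^ 2 ≤ 9 * x ^ 2 := by
  have hfloor : (⌊x⌋₊ : ℝ) ≤ x := Nat.floor_le (by linarith)
  have hpos : (0 : ℝ) ≤ 2 * ⌊x⌋₊ + 1 := by positivity
  push_cast
  nlinarith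

lemma card_filter_dist_gridPos_le_sqrt {d ρ : ℝ} (hd : 0 < d) (hρ : d ^ 2 ≤ ρ)
    (s : Finset (ℕ × ℕ)) (u : ℕ × ℕ) :
    (#{v ∈ s | dist (gridPos d v) (gridPos d u) ≤ √ρ} : ℝ) ≤ 9 * ρ / d ^ 2 := by
  have hratio : 1 ≤ √ρ / d := by
    rw [le_div_iff₀ hd, one_mul]
    exact Real.le_sqrt_of_sq_le hρ
  calc (#{v ∈ s | dist (gridPos d v) (gridPos d u) ≤ √ρ} : ℝ)
      ≤ ((2 * ⌊√ρ / d⌋₊ + 1 : ℕ) : ℝ) ^ 2 := by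
        exact_mod_cast card_filter_dist_gridPos_le hd s u √ρ
    _ ≤ 9 * (√ρ / d) ^ 2 := Nat.two_mul_floor_add_one_sq_le hratio
    _ = 9 * ρ / d ^ 2 := by
        rw [div_pow, Real.sq_sqrt ((sq_nonneg d).trans hρ), mul_div_assoc]

theorem stmt_15_general (m : ℕ) (d : ℝ) (hd : 0 < d)
    (A : Finset (ℕ × ℕ))
    (ρ : ℕ × ℕ → ℝ) (hρ : ∀ u ∈ A, d ^ 2 ≤ ρ u)
    (hcover : ∀ v ∈ Finset.range m ×ˢ Finset.range m,
      ∃ u ∈ A, dist (gridPos d v) (gridPos d u) ≤ Real.sqrt (ρ u)) :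
    (m ^ 2 : ℝ) * d ^ 2 / 9 ≤ ∑ u ∈ A, ρ u := by
  set G := range m ×ˢ range m
  have hG : G ⊆ A.biUnion fun u => {v ∈ G | dist (gridPos d v) (gridPos d u) ≤ √(ρ u)} := by
    intro v hv
    obtain ⟨u, hu, hvu⟩ := hcover v hv
    exact mem_biUnion.2 ⟨u, hu, mem_filter.2 ⟨hv, hvu⟩⟩
  have hcount : (m ^ 2 : ℝ) ≤ ∑ u ∈ A, 9 * ρ u / d ^ 2 := by
    calc (m ^ 2 : ℝ) = #G := by simp [G, sq]
      _ ≤ ∑ u ∈ A, (#{v ∈ G | dist (gridPos d v) (gridPos d u) ≤ √(ρ u)} : ℝ) := by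
        exact_mod_cast (card_le_card hG).trans card_biUnion_le
      _ ≤ _ := sum_le_sum fun u hu => card_filter_dist_gridPos_le_sqrt hd (hρ u hu) G u
  rw [← sum_div, ← mul_sum, le_div_iff₀ (by positivity)] at hcount
  linarith

theorem stmt_15 (m : ℕ) (d : ℝ) (hd : 0 < d)
    (A : Finset (ℕ × ℕ)) (hA : A ⊆ Finset.range m ×ˢ Finset.range m)
    (ρ : ℕ × ℕ → ℝ) (hρ : ∀ u ∈ A, d ^ 2 ≤ ρ u)
    (hcover : ∀ v ∈ Finset.range m ×ˢ Finset.range m,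
      ∃ u ∈ A, dist (gridPos d v) (gridPos d u) ≤ Real.sqrt (ρ u)) :
    (m ^ 2 : ℝ) * d ^ 2 / 9 ≤ ∑ u ∈ A, ρ u :=
  stmt_15_general m d hd A ρ hρ hcover
end
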